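/- Define, for a sufficiently smooth function û on K̂ = [−1,1]² and v̂ in the reference shape space P̂ = P₂(K̂) + span{ξ₁³, ξ₂³}, the functional B₂(û, v̂) = (1/3)∫_{K̂} (∂³û/∂ξ₁∂ξ₂²)(∂³v̂/∂ξ₁³) dξ + (1/3)∫_{K̂} (∂³û/∂ξ₁²∂ξ₂)(∂³v̂/∂ξ₂³) dξ − (1/6)∫_{K̂} (∫_{−1}^{1} (∂³û/∂ξ₁∂ξ₂²)(1, ξ₂) dξ₂)(∂³v̂/∂ξ₁³) dξ − (1/6)∫_{K̂} (∫_{−1}^{1} (∂³û/∂ξ₁²∂ξ₂)(ξ₁, −1) dξ₁)(∂³v̂/∂ξ₂³) dξ. Then B₂(û, v̂) = 0 for every polynomial û of total degree ≤ 3 and every v̂ ∈ P̂. -/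

import Mathlib

open MeasureTheory

/-- Partial derivative in the first variable of a curried function on `ℝ²`. -/
noncomputable def pdx (f : ℝ → ℝ → ℝ) : ℝ → ℝ → ℝ := fun x y => deriv (fun t => f t y) x

/-- Partial derivative in the second variable of a curried function on `ℝ²`. -/
noncomputable def pdy (f : ℝ → ℝ → ℝ) : ℝ → ℝ → ℝ := fun x y => deriv (fun t => f x t) y

/-- Membership in the shape space `P(K) = P₂(K) + span{x₁³, x₂³}` of the two-dimensional
rectangular Morley element. -/
def MorleyShape2 (w : ℝ → ℝ → ℝ) : Prop :=
  ∃ c0 c1 c2 c3 c4 c5 c6 c7 : ℝ, ∀ x y : ℝ,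
    w x y = c0 + c1 * x + c2 * y + c3 * x ^ 2 + c4 * (x * y) + c5 * y ^ 2
      + c6 * x ^ 3 + c7 * y ^ 3

/-- The functional `B₂` on the reference square `[-1,1]²`. -/
noncomputable def B2 (u v : ℝ → ℝ → ℝ) : ℝ :=
  (1 / 3) * (∫ x in (-1:ℝ)..1, ∫ y in (-1:ℝ)..1,
      pdx (pdy (pdy u)) x y * pdx (pdx (pdx v)) x y)
    + (1 / 3) * (∫ x in (-1:ℝ)..1, ∫ y in (-1:ℝ)..1,
      pdx (pdx (pdy u)) x y * pdy (pdy (pdy v)) x y)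
    - (1 / 6) * (∫ x in (-1:ℝ)..1, ∫ y in (-1:ℝ)..1,
      (∫ t in (-1:ℝ)..1, pdx (pdy (pdy u)) 1 t) * pdx (pdx (pdx v)) x y)
    - (1 / 6) * (∫ x in (-1:ℝ)..1, ∫ y in (-1:ℝ)..1,
      (∫ t in (-1:ℝ)..1, pdx (pdx (pdy u)) t (-1)) * pdy (pdy (pdy v)) x y)

/-- Membership in the space of polynomials of total degree at most 3 in two variables. -/
def PolyDeg3Two (u : ℝ → ℝ → ℝ) : Prop :=
  ∃ c0 c1 c2 c3 c4 c5 c6 c7 c8 c9 : ℝ, ∀ x y : ℝ,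
    u x y = c0 + c1 * x + c2 * y + c3 * x ^ 2 + c4 * (x * y) + c5 * y ^ 2
      + c6 * x ^ 3 + c7 * (x ^ 2 * y) + c8 * (x * y ^ 2) + c9 * y ^ 3

/-! The third derivatives entering `B2` are constant: `∂ₓ∂ᵧ²u` and `∂ₓ²∂ᵧu` for a cubic
`u`, and `∂ₓ³v`, `∂ᵧ³v` for a Morley shape function `v`. For constants the edge integral
`∫_{-1}^{1} a` is `2a` and the square has area `4`, so each `1/6`-term `(1/6)·2a·4b` cancels
its `1/3`-term `(1/3)·4ab`. -/

theorem deriv_cubic (a b c d x : ℝ) :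
    deriv (fun t => a + b * t + c * t ^ 2 + d * t ^ 3) x = b + 2 * c * x + 3 * d * x ^ 2 := by
  have h : HasDerivAt (fun t => a + b * t + c * t ^ 2 + d * t ^ 3) _ x :=
    ((((hasDerivAt_id x).const_mul b).const_add a).add
      ((hasDerivAt_pow 2 x).const_mul c)).add ((hasDerivAt_pow 3 x).const_mul d)
  rw [h.deriv]
  push_cast
  ring

section CubicSlices

variable {f : ℝ → ℝ → ℝ} (a b c d : ℝ → ℝ)

theorem pdx_eq_of_cubic (hf : ∀ x y, f x y = a y + b y * x + c y * x ^ 2 + d y * x ^ 3)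
    (x y : ℝ) : pdx f x y = b y + 2 * c y * x + 3 * d y * x ^ 2 := by
  simp only [pdx, hf, deriv_cubic]

theorem pdy_eq_of_cubic (hf : ∀ x y, f x y = a x + b x * y + c x * y ^ 2 + d x * y ^ 3)
    (x y : ℝ) : pdy f x y = b x + 2 * c x * y + 3 * d x * y ^ 2 := by
  simp only [pdy, hf, deriv_cubic]

theorem pdx_pdx_eq_of_cubic (hf : ∀ x y, f x y = a y + b y * x + c y * x ^ 2 + d y * x ^ 3)
    (x y : ℝ) : pdx (pdx f) x y = 2 * c y + 6 * d y * x := by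
  rw [pdx_eq_of_cubic (f := pdx f) b (fun y => 2 * c y) (fun y => 3 * d y) (fun _ => 0)
    (fun x y => by rw [pdx_eq_of_cubic a b c d hf]; ring)]
  ring

theorem pdy_pdy_eq_of_cubic (hf : ∀ x y, f x y = a x + b x * y + c x * y ^ 2 + d x * y ^ 3)
    (x y : ℝ) : pdy (pdy f) x y = 2 * c x + 6 * d x * y := by
  rw [pdy_eq_of_cubic (f := pdy f) b (fun x => 2 * c x) (fun x => 3 * d x) (fun _ => 0)
    (fun x y => by rw [pdy_eq_of_cubic a b c d hf]; ring)]
  ring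

theorem pdx_pdx_pdx_eq_of_cubic
    (hf : ∀ x y, f x y = a y + b y * x + c y * x ^ 2 + d y * x ^ 3) (x y : ℝ) :
    pdx (pdx (pdx f)) x y = 6 * d y := by
  rw [pdx_eq_of_cubic (f := pdx (pdx f)) (fun y => 2 * c y) (fun y => 6 * d y) (fun _ => 0)
    (fun _ => 0) (fun x y => by rw [pdx_pdx_eq_of_cubic a b c d hf]; ring)]
  ring

theorem pdy_pdy_pdy_eq_of_cubic
    (hf : ∀ x y, f x y = a x + b x * y + c x * y ^ 2 + d x * y ^ 3) (x y : ℝ) :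
    pdy (pdy (pdy f)) x y = 6 * d x := by
  rw [pdy_eq_of_cubic (f := pdy (pdy f)) (fun x => 2 * c x) (fun x => 6 * d x) (fun _ => 0)
    (fun _ => 0) (fun x y => by rw [pdy_pdy_eq_of_cubic a b c d hf]; ring)]
  ring

end CubicSlices

theorem MorleyShape2.exists_pdx_pdx_pdx_eq {v : ℝ → ℝ → ℝ} (hv : MorleyShape2 v) :
    ∃ p, ∀ x y, pdx (pdx (pdx v)) x y = p := by
  obtain ⟨d0, d1, d2, d3, d4, d5, d6, d7, hv⟩ := hv
  exact ⟨6 * d6, pdx_pdx_pdx_eq_of_cubic (fun y => d0 + d2 * y + d5 * y ^ 2 + d7 * y ^ 3)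
    (fun y => d1 + d4 * y) (fun _ => d3) (fun _ => d6) (fun x y => by rw [hv]; ring)⟩

theorem MorleyShape2.exists_pdy_pdy_pdy_eq {v : ℝ → ℝ → ℝ} (hv : MorleyShape2 v) :
    ∃ q, ∀ x y, pdy (pdy (pdy v)) x y = q := by
  obtain ⟨d0, d1, d2, d3, d4, d5, d6, d7, hv⟩ := hv
  exact ⟨6 * d7, pdy_pdy_pdy_eq_of_cubic (fun x => d0 + d1 * x + d3 * x ^ 2 + d6 * x ^ 3)
    (fun x => d2 + d4 * x) (fun _ => d5) (fun _ => d7) (fun x y => by rw [hv]; ring)⟩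

theorem PolyDeg3Two.exists_pdx_pdy_pdy_eq {u : ℝ → ℝ → ℝ} (hu : PolyDeg3Two u) :
    ∃ a, ∀ x y, pdx (pdy (pdy u)) x y = a := by
  obtain ⟨c0, c1, c2, c3, c4, c5, c6, c7, c8, c9, hu⟩ := hu
  have huyy := pdy_pdy_eq_of_cubic (f := u) (fun x => c0 + c1 * x + c3 * x ^ 2 + c6 * x ^ 3)
    (fun x => c2 + c4 * x + c7 * x ^ 2) (fun x => c5 + c8 * x) (fun _ => c9)
    (fun x y => by rw [hu]; ring)
  refine ⟨2 * c8, fun x y => ?_⟩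
  rw [pdx_eq_of_cubic (f := pdy (pdy u)) (fun y => 2 * c5 + 6 * c9 * y) (fun _ => 2 * c8)
    (fun _ => 0) (fun _ => 0) (fun x y => by rw [huyy]; ring)]
  ring

theorem PolyDeg3Two.exists_pdx_pdx_pdy_eq {u : ℝ → ℝ → ℝ} (hu : PolyDeg3Two u) :
    ∃ b, ∀ x y, pdx (pdx (pdy u)) x y = b := by
  obtain ⟨c0, c1, c2, c3, c4, c5, c6, c7, c8, c9, hu⟩ := hu
  have huy := pdy_eq_of_cubic (f := u) (fun x => c0 + c1 * x + c3 * x ^ 2 + c6 * x ^ 3)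
    (fun x => c2 + c4 * x + c7 * x ^ 2) (fun x => c5 + c8 * x) (fun _ => c9)
    (fun x y => by rw [hu]; ring)
  refine ⟨2 * c7, fun x y => ?_⟩
  rw [pdx_pdx_eq_of_cubic (f := pdy u) (fun y => c2 + 2 * c5 * y + 3 * c9 * y ^ 2)
    (fun y => c4 + 2 * c8 * y) (fun _ => c7) (fun _ => 0) (fun x y => by rw [huy]; ring)]
  ring

theorem B2_eq_zero_of_forall_eq_const {u v : ℝ → ℝ → ℝ} {a b p q : ℝ}
    (ha : ∀ x y, pdx (pdy (pdy u)) x y = a) (hb : ∀ x y, pdx (pdx (pdy u)) x y = b)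
    (hp : ∀ x y, pdx (pdx (pdx v)) x y = p) (hq : ∀ x y, pdy (pdy (pdy v)) x y = q) :
    B2 u v = 0 := by
  simp only [B2, ha, hb, hp, hq, intervalIntegral.integral_const, smul_eq_mul]
  ring

/-- The functional `B₂` vanishes on cubic polynomials tested against the reference
Morley shape space. -/
theorem stmt_9 (u v : ℝ → ℝ → ℝ) (hu : PolyDeg3Two u) (hv : MorleyShape2 v) :
    B2 u v = 0 := by
  obtain ⟨a, ha⟩ := hu.exists_pdx_pdy_pdy_eq
  obtain ⟨b, hb⟩ := hu.exists_pdx_pdx_pdy_eq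
  obtain ⟨p, hp⟩ := hv.exists_pdx_pdx_pdx_eq
  obtain ⟨q, hq⟩ := hv.exists_pdy_pdy_pdy_eq
  exact B2_eq_zero_of_forall_eq_const ha hb hp hq
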